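/- The integral of the function p ↦ (1 − exp(−p))·(1 − exp(p − 2))·(1 − exp(−(1 − p)))·(1 − exp(−p − 1)) over the interval [0,1] equals 2·exp(−1) + 2·exp(−2) + 3·exp(−4) − 1. -/

import Mathlib

/-!
With `q = e⁻¹`, `u = e^{-p}` and `v = e^p`, the integrand is `(1 - u)(1 - q²v)(1 - qv)(1 - qu)`.
Since `uv = 1`, it collapses to a combination of `1, e^{±p}, e^{±2p}` with coefficients
polynomial in `q`, which has an explicit antiderivative.
-/

open Real

lemma four_factor_product_eq_of_mul_eq_one {R : Type*} [CommRing R] (q u v : R) (huv : u * v = 1) :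
    (1 - u) * (1 - q ^ 2 * v) * (1 - q * v) * (1 - q * u) =
      (1 + q + 2 * q ^ 2 + q ^ 3 + q ^ 4) - (1 + q + q ^ 2 + q ^ 3) * u
        - (q + q ^ 2 + q ^ 3 + q ^ 4) * v + q * u ^ 2 + q ^ 3 * v ^ 2 := by
  linear_combination
    (q + 2 * q ^ 2 + q ^ 3 + q ^ 4 - q ^ 2 * u - q ^ 3 * u - q ^ 3 * v - q ^ 4 * v
      + q ^ 4 * u * v) * huv

lemma integrand_eq_exp_poly (p : ℝ) :
    (1 - exp (-p)) * (1 - exp (p - 2)) * (1 - exp (-(1 - p))) * (1 - exp (-p - 1)) =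
      (1 + exp (-1) + 2 * exp (-1) ^ 2 + exp (-1) ^ 3 + exp (-1) ^ 4)
        - (1 + exp (-1) + exp (-1) ^ 2 + exp (-1) ^ 3) * exp (-p)
        - (exp (-1) + exp (-1) ^ 2 + exp (-1) ^ 3 + exp (-1) ^ 4) * exp p
        + exp (-1) * exp (-p) ^ 2 + exp (-1) ^ 3 * exp p ^ 2 := by
  have hv₂ : exp (p - 2) = exp (-1) ^ 2 * exp p := by
    rw [← exp_nat_mul, ← exp_add]; ring_nf
  have hv₁ : exp (-(1 - p)) = exp (-1) * exp p := by rw [← exp_add]; ring_nf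
  have hu₁ : exp (-p - 1) = exp (-1) * exp (-p) := by rw [← exp_add]; ring_nf
  rw [hv₂, hv₁, hu₁]
  exact four_factor_product_eq_of_mul_eq_one _ _ _ (by rw [← exp_add, neg_add_cancel, exp_zero])

lemma hasDerivAt_primitive (q x : ℝ) :
    HasDerivAt
      (fun x => (1 + q + 2 * q ^ 2 + q ^ 3 + q ^ 4) * x + (1 + q + q ^ 2 + q ^ 3) * exp (-x)
        - (q + q ^ 2 + q ^ 3 + q ^ 4) * exp x - q / 2 * exp (-x) ^ 2 + q ^ 3 / 2 * exp x ^ 2)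
      ((1 + q + 2 * q ^ 2 + q ^ 3 + q ^ 4) - (1 + q + q ^ 2 + q ^ 3) * exp (-x)
        - (q + q ^ 2 + q ^ 3 + q ^ 4) * exp x + q * exp (-x) ^ 2 + q ^ 3 * exp x ^ 2) x := by
  have hneg : HasDerivAt (fun x => exp (-x)) (-exp (-x)) x := by
    simpa using (hasDerivAt_neg x).exp
  have hexp := hasDerivAt_exp x
  refine (((((hasDerivAt_id x).const_mul (1 + q + 2 * q ^ 2 + q ^ 3 + q ^ 4)).add
    (hneg.const_mul (1 + q + q ^ 2 + q ^ 3))).sub (hexp.const_mul (q + q ^ 2 + q ^ 3 + q ^ 4))).sub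
    ((hneg.pow 2).const_mul (q / 2))).add ((hexp.pow 2).const_mul (q ^ 3 / 2)) |>.congr_deriv ?_
  ring

/-- `∫_0^1 (1 − e^{−p})(1 − e^{p−2})(1 − e^{−(1−p)})(1 − e^{−p−1}) dp
      = 2e^{−1} + 2e^{−2} + 3e^{−4} − 1`. -/
theorem stmt_13 :
    ∫ p in (0 : ℝ)..1,
        (1 - Real.exp (-p)) * (1 - Real.exp (p - 2)) *
          (1 - Real.exp (-(1 - p))) * (1 - Real.exp (-p - 1))
      = 2 * Real.exp (-1) + 2 * Real.exp (-2) + 3 * Real.exp (-4) - 1 := by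
  simp_rw [integrand_eq_exp_poly]
  rw [intervalIntegral.integral_eq_sub_of_hasDerivAt (fun x _ => hasDerivAt_primitive _ x)
    ((by fun_prop : Continuous _).intervalIntegrable 0 1)]
  have hinv : exp 1 * exp (-1) = 1 := by rw [← exp_add, add_neg_cancel, exp_zero]
  have hsq : exp (-2) = exp (-1) ^ 2 := by rw [← exp_nat_mul]; norm_num
  have hfourth : exp (-4) = exp (-1) ^ 4 := by rw [← exp_nat_mul]; norm_num
  simp only [neg_zero, exp_zero, hsq, hfourth]
  linear_combination
    (exp (-1) / 2 * (exp 1 * exp (-1) + 1) - 1 - exp (-1) - exp (-1) ^ 2 - exp (-1) ^ 3) * hinv
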